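/- Let n ≥ 2 and let R^n_h be a perturbed C^2 half space with boundary Γ = ∂R^n_h. Then for any x in the ρ_0-neighborhood Γ^{R^n}_{ρ_0} = {x : |d(x)| < ρ_0} and any y ∈ Γ, |∇d(x) − ∇d(y)| ≤ C(n) C_s(h)^2 ‖∇'^2 h‖_{L^∞(R^{n-1})} |x − y|, where d is the signed distance to Γ (positive inside R^n_h) and C_s(h) = 1 + ‖h‖_{C^1(R^{n-1})}. -/

import Mathlib

noncomputable section

open MeasureTheory Metric Set Filter
open scoped ENNReal NNReal RealInnerProductSpace

namespace GG

abbrev En (n : ℕ) := EuclideanSpace ℝ (Fin n)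
abbrev En' (n : ℕ) := EuclideanSpace ℝ (Fin (n - 1))

/-- First `n-1` coordinates of a point of `ℝⁿ`. -/
def proj (n : ℕ) (x : En n) : En' n :=
  WithLp.toLp 2 (fun j => x ⟨(j : ℕ), lt_of_lt_of_le j.2 (Nat.sub_le n 1)⟩)

/-- Last coordinate of a point of `ℝⁿ`. -/
def lastC (n : ℕ) (x : En n) : ℝ :=
  if hn : 0 < n then x ⟨n - 1, Nat.sub_lt hn one_pos⟩ else 0

/-- The point of `ℝⁿ` with horizontal part `y` and last coordinate `t`. -/
def emb (n : ℕ) (y : En' n) (t : ℝ) : En n :=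
  WithLp.toLp 2 (fun i => if hi : (i : ℕ) < n - 1 then y ⟨(i : ℕ), hi⟩ else t)

/-- The perturbed half space `{x : xₙ > h(x')}`. -/
def dom (n : ℕ) (h : En' n → ℝ) : Set (En n) := {x | h (proj n x) < lastC n x}

/-- The boundary graph `Γ = {x : xₙ = h(x')}`. -/
def bdry (n : ℕ) (h : En' n → ℝ) : Set (En n) := {x | lastC n x = h (proj n x)}

open Classical in
/-- Signed distance to `Γ`, positive inside the domain. -/
def sdist (n : ℕ) (h : En' n → ℝ) (x : En n) : ℝ :=
  if x ∈ dom n h then infDist x (bdry n h) else -(infDist x (bdry n h))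

/-- `ρ`-unique-projection property of a set. -/
def UniqueProj (n : ℕ) (Γ : Set (En n)) (ρ : ℝ) : Prop :=
  ∀ x : En n, infDist x Γ < ρ → ∃! y, y ∈ Γ ∧ dist x y = infDist x Γ

/-- The reach of `Γ`. -/
def reach (n : ℕ) (Γ : Set (En n)) : ℝ :=
  sSup {ρ : ℝ | 0 < ρ ∧ UniqueProj n Γ ρ}

/-- BMO seminorm over `Ω`, over balls of radius `< μ`. -/
def bmoSemi (n : ℕ) (Ω : Set (En n)) (μ : ℝ≥0∞) (v : En n → En n) : ℝ≥0∞ :=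
  ⨆ (x : En n) (r : ℝ) (_ : 0 < r) (_ : ENNReal.ofReal r < μ) (_ : ball x r ⊆ Ω),
    (volume (ball x r))⁻¹ *
      ∫⁻ y in ball x r, (‖v y - ⨍ z in ball x r, v z ∂volume‖₊ : ℝ≥0∞)

/-- Boundary seminorm `b^ν`. -/
def bSemi (n : ℕ) (Ω Γ : Set (En n)) (ν : ℝ≥0∞) (f : En n → ℝ) : ℝ≥0∞ :=
  ⨆ (x : En n) (_ : x ∈ Γ) (r : ℝ) (_ : 0 < r) (_ : ENNReal.ofReal r < ν),
    (ENNReal.ofReal (r ^ n))⁻¹ * ∫⁻ y in Ω ∩ ball x r, (‖f y‖₊ : ℝ≥0∞)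

/-- Normal component `∇d_Γ · v`. -/
def nc (n : ℕ) (Γ : Set (En n)) (v : En n → En n) (x : En n) : ℝ :=
  fderiv ℝ (fun z => infDist z Γ) x (v x)

/-- The `vBMOL²` norm. -/
def vbmoL2Norm (n : ℕ) (Ω Γ : Set (En n)) (v : En n → En n) : ℝ≥0∞ :=
  bmoSemi n Ω ⊤ v + bSemi n Ω Γ ⊤ (nc n Γ v) + eLpNorm v 2 (volume.restrict Ω)

/-- Membership in `vBMOL²(Ω)`. -/
def MemvBMOL2 (n : ℕ) (Ω Γ : Set (En n)) (v : En n → En n) : Prop :=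
  MemLp v 2 (volume.restrict Ω) ∧ bmoSemi n Ω ⊤ v < ⊤ ∧ bSemi n Ω Γ ⊤ (nc n Γ v) < ⊤

/-- Distributionally divergence free in `Ω`. -/
def DivFreeIn (n : ℕ) (Ω : Set (En n)) (v : En n → En n) : Prop :=
  ∀ φ : En n → ℝ, ContDiff ℝ (⊤ : ℕ∞) φ → HasCompactSupport φ → tsupport φ ⊆ Ω →
    ∫ x in Ω, ⟪v x, gradient φ x⟫ = 0

/-- Divergence free in `Ω` together with vanishing normal trace on `∂Ω`. -/
def DivFreeZeroTrace (n : ℕ) (Ω : Set (En n)) (v : En n → En n) : Prop :=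
  ∀ φ : En n → ℝ, ContDiff ℝ (⊤ : ℕ∞) φ → HasCompactSupport φ →
    ∫ x in Ω, ⟪v x, gradient φ x⟫ = 0

/-- `w` is the (pointwise) gradient of `q` on `Ω`. -/
def IsGradientOn (n : ℕ) (Ω : Set (En n)) (q : En n → ℝ) (w : En n → En n) : Prop :=
  ∀ x ∈ Ω, HasGradientAt q (w x) x

/-- `w` is the weak (distributional) gradient of `q` on `Ω`. -/
def WeakGradOn (n : ℕ) (Ω : Set (En n)) (q : En n → ℝ) (w : En n → En n) : Prop :=
  ∀ φ : En n → ℝ, ContDiff ℝ (⊤ : ℕ∞) φ → HasCompactSupport φ → tsupport φ ⊆ Ω →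
    ∫ x in Ω, q x • gradient φ x = -∫ x in Ω, φ x • w x

/-- `q ∈ L²_loc(Ω)`. -/
def L2loc (n : ℕ) (Ω : Set (En n)) (q : En n → ℝ) : Prop :=
  ∀ Kc : Set (En n), IsCompact Kc → Kc ⊆ Ω → MemLp q 2 (volume.restrict Kc)

/-- Laplacian. -/
def lap (n : ℕ) (φ : En n → ℝ) (x : En n) : ℝ :=
  ∑ i : Fin n,
    iteratedFDeriv ℝ 2 φ x ![EuclideanSpace.single i 1, EuclideanSpace.single i 1]

/-- Squared Gagliardo seminorm of order 1/2 on `ℝ^{n-1}` (kernel `|x-y|^{-n}`). -/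
def gagSqE' (n : ℕ) (f : En' n → ℝ) : ℝ≥0∞ :=
  ∫⁻ x, ∫⁻ y, ENNReal.ofReal (|f x - f y| ^ 2 / ‖x - y‖ ^ n)

/-- The `Ḣ^{1/2}(ℝ^{n-1})` (Gagliardo) norm. -/
def hHalfNormE' (n : ℕ) (f : En' n → ℝ) : ℝ≥0∞ := gagSqE' n f ^ (1 / 2 : ℝ)

/-- Membership in `Ḣ^{1/2}(ℝ^{n-1})`. -/
def MemHhalfE' (n : ℕ) (f : En' n → ℝ) : Prop :=
  MemLp f (ENNReal.ofReal ((2 * (n : ℝ) - 2) / ((n : ℝ) - 2))) volume ∧ gagSqE' n f < ⊤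

/-- Surface measure on a hypersurface: `(n-1)`-dimensional Hausdorff measure. -/
def surf (n : ℕ) : Measure (En n) := μH[((n : ℝ) - 1)]

/-- Squared Gagliardo seminorm of order 1/2 on a hypersurface `Γ ⊆ ℝⁿ`. -/
def gagSqS (n : ℕ) (Γ : Set (En n)) (f : En n → ℝ) : ℝ≥0∞ :=
  ∫⁻ x in Γ, ∫⁻ y in Γ, ENNReal.ofReal (|f x - f y| ^ 2 / ‖x - y‖ ^ n) ∂surf n ∂surf n

/-- The `Ḣ^{1/2}(Γ)` norm. -/
def hHalfNormS (n : ℕ) (Γ : Set (En n)) (f : En n → ℝ) : ℝ≥0∞ :=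
  gagSqS n Γ f ^ (1 / 2 : ℝ)

/-- Membership in `Ḣ^{1/2}(Γ)`. -/
def MemHhalfS (n : ℕ) (Γ : Set (En n)) (f : En n → ℝ) : Prop :=
  MemLp f (ENNReal.ofReal ((2 * (n : ℝ) - 2) / ((n : ℝ) - 2))) ((surf n).restrict Γ) ∧
    gagSqS n Γ f < ⊤

/-- The dual `Ḣ^{-1/2}(ℝ^{n-1})` norm. -/
def hmHalfNormE' (n : ℕ) (g : En' n → ℝ) : ℝ≥0∞ :=
  ⨆ (f : En' n → ℝ) (_ : MemHhalfE' n f) (_ : hHalfNormE' n f ≤ 1)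
    (_ : Integrable (fun y => g y * f y) volume),
    ENNReal.ofReal |∫ y, g y * f y|

/-- The dual `Ḣ^{-1/2}(Γ)` norm. -/
def hmHalfNormS (n : ℕ) (Γ : Set (En n)) (g : En n → ℝ) : ℝ≥0∞ :=
  ⨆ (f : En n → ℝ) (_ : MemHhalfS n Γ f) (_ : hHalfNormS n Γ f ≤ 1)
    (_ : Integrable (fun y => g y * f y) ((surf n).restrict Γ)),
    ENNReal.ofReal |∫ y in Γ, g y * f y ∂surf n|

/-- The `L^∞(Γ) ∩ Ḣ^{-1/2}(Γ)` norm. -/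
def LinfHmHalfNormS (n : ℕ) (Γ : Set (En n)) (g : En n → ℝ) : ℝ≥0∞ :=
  eLpNorm g ⊤ ((surf n).restrict Γ) + hmHalfNormS n Γ g

/-- Membership in `L^∞(Γ) ∩ Ḣ^{-1/2}(Γ)`. -/
def MemLinfHmHalfS (n : ℕ) (Γ : Set (En n)) (g : En n → ℝ) : Prop :=
  MemLp g ⊤ ((surf n).restrict Γ) ∧ hmHalfNormS n Γ g < ⊤

/-- Fundamental solution of `-Δ` in `ℝⁿ`. -/
def fundSol (n : ℕ) (x : En n) : ℝ :=
  if n = 2 then -Real.log ‖x‖ / (2 * Real.pi)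
  else ‖x‖ ^ ((2 : ℝ) - n) / ((n : ℝ) * ((n : ℝ) - 2) * (volume (ball (0 : En n) 1)).toReal)

/-- Outward unit normal of the graph `Γ` at the point over `y'`. -/
def outNormal (n : ℕ) (h : En' n → ℝ) (y' : En' n) : En n :=
  (Real.sqrt (1 + ‖gradient h y'‖ ^ 2))⁻¹ • emb n (gradient h y') (-1)

/-- `∂E/∂n_y (x - y)`: normal derivative in `y` of `E(x - ·)`. -/
def dEdny (n : ℕ) (h : En' n → ℝ) (x y : En n) : ℝ :=
  fderiv ℝ (fun z => fundSol n (x - z)) y (outNormal n h (proj n y))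

/-- `∂E/∂n_x (x - y)`: exterior normal derivative in `x`, `n_x = -∇d(x)`. -/
def dEdnx (n : ℕ) (h : En' n → ℝ) (x y : En n) : ℝ :=
  fderiv ℝ (fun z => fundSol n (z - y)) x (-(gradient (sdist n h) x))

/-- The double layer potential `Qg`. -/
def Qop (n : ℕ) (h : En' n → ℝ) (g : En n → ℝ) (x : En n) : ℝ :=
  ∫ y in bdry n h, dEdnx n h x y * g y ∂surf n

/-- The boundary trace operator `S`. -/
def Sop (n : ℕ) (h : En' n → ℝ) (g : En n → ℝ) (x₀ : En n) : ℝ :=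
  -∫ y in bdry n h, dEdnx n h x₀ y * g y ∂surf n

/-- Single layer potential `E * (δ_Γ ⊗ g)`. -/
def SLP (n : ℕ) (h : En' n → ℝ) (g : En n → ℝ) (x : En n) : ℝ :=
  ∫ y in bdry n h, fundSol n (x - y) * g y ∂surf n

/-- Single layer potential on the hyperplane `∂ℝⁿ₊`. -/
def SLPhalf (n : ℕ) (g : En' n → ℝ) (x : En n) : ℝ :=
  ∫ y', fundSol n (x - emb n y' 0) * g y'

/-- `sup |h|`. -/
def supAbs (n : ℕ) (h : En' n → ℝ) : ℝ := ⨆ y, |h y|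

/-- `sup ‖∇'h‖`. -/
def supGrad (n : ℕ) (h : En' n → ℝ) : ℝ := ⨆ y, ‖fderiv ℝ h y‖

/-- `sup ‖∇'²h‖`. -/
def supHess (n : ℕ) (h : En' n → ℝ) : ℝ := ⨆ y, ‖fderiv ℝ (fderiv ℝ h) y‖

/-- `‖h‖_{C¹}`. -/
def normC1 (n : ℕ) (h : En' n → ℝ) : ℝ := supAbs n h + supGrad n h

/-- `C_s(h) = 1 + ‖h‖_{C¹}`. -/
def Cs (n : ℕ) (h : En' n → ℝ) : ℝ := 1 + normC1 n h

/-- `C_1(h) = 1 + R_h ‖∇'²h‖_∞`. -/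
def C1c (n : ℕ) (h : En' n → ℝ) (Rh : ℝ) : ℝ := 1 + Rh * supHess n h

/-- `C_{*,1}(h)`. -/
def Cst1 (n : ℕ) (h : En' n → ℝ) (Rh : ℝ) : ℝ :=
  C1c n h Rh ^ 3 * (1 + Rh ^ ((1 : ℝ) / 4)) *
    (Rh ^ ((1 : ℝ) / 2) * supHess n h + Rh ^ ((5 : ℝ) / 2) * supHess n h ^ 3)

/-- `C_{*,2}(h)`. -/
def Cst2 (n : ℕ) (h : En' n → ℝ) (Rh : ℝ) : ℝ :=
  (Rh + Rh ^ (1 / (2 * (n : ℝ)))) * supHess n h + (Rh ^ ((n : ℝ) - 1) + 1) * normC1 n h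

/-- `R_h` is the smallest radius with `supp h ⊆ closedBall 0 R`. -/
def IsSuppRadius (n : ℕ) (h : En' n → ℝ) (Rh : ℝ) : Prop :=
  IsLeast {R : ℝ | 0 ≤ R ∧ tsupport h ⊆ closedBall 0 R} Rh

section AuxProof

variable {n : ℕ}

/-! ### Coordinate lemmas -/

private lemma fin_sum_split (hn : 0 < n) (F : Fin n → ℝ) :
    ∑ i, F i = (∑ j : Fin (n - 1), F ⟨j.1, lt_of_lt_of_le j.2 (Nat.sub_le n 1)⟩) +
      F ⟨n - 1, Nat.sub_lt hn one_pos⟩ := by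
  have h1 : n - 1 + 1 = n := Nat.succ_pred_eq_of_pos hn
  rw [← Equiv.sum_comp (finCongr h1) F, Fin.sum_univ_castSucc]
  exact congrArg₂ (· + ·)
    (Finset.sum_congr rfl fun j _ => congrArg F (Fin.ext (by simp)))
    (congrArg F (Fin.ext (by simp)))

private lemma emb_apply_lt (v : En' n) (t : ℝ) (i : Fin n) (hi : (i : ℕ) < n - 1) :
    emb n v t i = v ⟨i, hi⟩ := dif_pos hi

private lemma emb_apply_ge (v : En' n) (t : ℝ) (i : Fin n) (hi : ¬ (i : ℕ) < n - 1) :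
    emb n v t i = t := dif_neg hi

private lemma lastC_eq (hn : 0 < n) (z : En n) :
    lastC n z = z ⟨n - 1, Nat.sub_lt hn one_pos⟩ := dif_pos hn

private lemma proj_apply (z : En n) (j : Fin (n - 1)) :
    proj n z j = z ⟨j.1, lt_of_lt_of_le j.2 (Nat.sub_le n 1)⟩ := rfl

private lemma proj_emb (v : En' n) (t : ℝ) : proj n (emb n v t) = v := by
  ext j
  rw [proj_apply, emb_apply_lt v t ⟨j.1, lt_of_lt_of_le j.2 (Nat.sub_le n 1)⟩ j.2]

private lemma lastC_emb (hn : 0 < n) (v : En' n) (t : ℝ) : lastC n (emb n v t) = t := by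
  rw [lastC_eq hn, emb_apply_ge]
  exact lt_irrefl _

private lemma emb_proj_lastC (hn : 0 < n) (z : En n) :
    emb n (proj n z) (lastC n z) = z := by
  ext i
  by_cases hi : (i : ℕ) < n - 1
  · rw [emb_apply_lt _ _ _ hi, proj_apply]
  · rw [emb_apply_ge _ _ _ hi, lastC_eq hn]
    refine congrArg (fun k => z k) ?_
    exact Fin.ext (by simp only [Fin.val_mk]; have := i.2; omega)

private lemma emb_sub (v w : En' n) (a b : ℝ) :
    emb n v a - emb n w b = emb n (v - w) (a - b) := by
  ext i
  by_cases hi : (i : ℕ) < n - 1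
  · simp only [PiLp.sub_apply, emb_apply_lt _ _ _ hi, PiLp.sub_apply]
  · simp only [PiLp.sub_apply, emb_apply_ge _ _ _ hi]

private lemma emb_smul (c : ℝ) (v : En' n) (a : ℝ) :
    c • emb n v a = emb n (c • v) (c * a) := by
  ext i
  by_cases hi : (i : ℕ) < n - 1
  · simp only [PiLp.smul_apply, emb_apply_lt _ _ _ hi, smul_eq_mul, PiLp.smul_apply]
  · simp only [PiLp.smul_apply, emb_apply_ge _ _ _ hi, smul_eq_mul]

private lemma inner_emb (hn : 0 < n) (v : En' n) (a : ℝ) (z : En n) :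
    ⟪emb n v a, z⟫ = ⟪v, proj n z⟫ + a * lastC n z := by
  rw [PiLp.inner_apply, PiLp.inner_apply]
  simp only [RCLike.inner_apply, conj_trivial]
  rw [fin_sum_split hn (fun i => z i * emb n v a i)]
  congr 1
  · refine Finset.sum_congr rfl fun j _ => ?_
    rw [emb_apply_lt v a ⟨j.1, lt_of_lt_of_le j.2 (Nat.sub_le n 1)⟩ j.2, proj_apply]
  · rw [emb_apply_ge _ _ _ (lt_irrefl _), lastC_eq hn, mul_comm]

private lemma norm_emb_sq (hn : 0 < n) (v : En' n) (a : ℝ) :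
    ‖emb n v a‖ ^ 2 = ‖v‖ ^ 2 + a ^ 2 := by
  rw [← real_inner_self_eq_norm_sq, ← real_inner_self_eq_norm_sq,
    inner_emb hn, proj_emb, lastC_emb hn]
  ring

private lemma lastC_sub (hn : 0 < n) (z w : En n) :
    lastC n (z - w) = lastC n z - lastC n w := by
  rw [lastC_eq hn, lastC_eq hn, lastC_eq hn, PiLp.sub_apply]

private lemma proj_sub (z w : En n) : proj n (z - w) = proj n z - proj n w := by
  ext j; rw [proj_apply, PiLp.sub_apply, PiLp.sub_apply, proj_apply, proj_apply]

private lemma lastC_smul (hn : 0 < n) (c : ℝ) (z : En n) :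
    lastC n (c • z) = c * lastC n z := by
  rw [lastC_eq hn, lastC_eq hn, PiLp.smul_apply, smul_eq_mul]

private lemma proj_smul (c : ℝ) (z : En n) : proj n (c • z) = c • proj n z := by
  ext j; rw [proj_apply, PiLp.smul_apply, PiLp.smul_apply, proj_apply]

private lemma lastC_add (hn : 0 < n) (z w : En n) :
    lastC n (z + w) = lastC n z + lastC n w := by
  rw [lastC_eq hn, lastC_eq hn, lastC_eq hn, PiLp.add_apply]

private lemma proj_add (z w : En n) : proj n (z + w) = proj n z + proj n w := by
  ext j; rw [proj_apply, PiLp.add_apply, PiLp.add_apply, proj_apply, proj_apply]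

private lemma norm_proj_le (hn : 0 < n) (z : En n) : ‖proj n z‖ ≤ ‖z‖ := by
  have h := norm_emb_sq hn (proj n z) (lastC n z)
  rw [emb_proj_lastC hn] at h
  nlinarith [norm_nonneg (proj n z), norm_nonneg z, sq_nonneg (lastC n z)]

private lemma hess_le {h : En' n → ℝ} (hC2 : ContDiff ℝ 2 h) (hsupp : HasCompactSupport h)
    (y : En' n) : ‖fderiv ℝ (fderiv ℝ h) y‖ ≤ supHess n h := by
  have hc1 : ContDiff ℝ 1 (fderiv ℝ h) := hC2.fderiv_right (by norm_num)
  have hcont : Continuous (fderiv ℝ (fderiv ℝ h)) := hc1.continuous_fderiv (by norm_num)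
  have hcs1 : HasCompactSupport (fderiv ℝ h) := hsupp.fderiv ℝ
  have hcs : HasCompactSupport (fderiv ℝ (fderiv ℝ h)) := hcs1.fderiv ℝ
  have hn : Continuous fun y => ‖fderiv ℝ (fderiv ℝ h) y‖ :=
    (continuous_norm (E := En' n →L[ℝ] En' n →L[ℝ] ℝ)).comp hcont
  have hcn : HasCompactSupport fun y => ‖fderiv ℝ (fderiv ℝ h) y‖ :=
    hcs.comp_left (norm_zero (E := En' n →L[ℝ] En' n →L[ℝ] ℝ))
  have hb : BddAbove (Set.range fun y => ‖fderiv ℝ (fderiv ℝ h) y‖) :=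
    hn.bddAbove_range_of_hasCompactSupport hcn
  exact le_ciSup hb y

private lemma supHess_nonneg {h : En' n → ℝ} (hC2 : ContDiff ℝ 2 h)
    (hsupp : HasCompactSupport h) : 0 ≤ supHess n h :=
  (norm_nonneg (fderiv ℝ (fderiv ℝ h) 0)).trans (hess_le hC2 hsupp 0)

private lemma fderiv_lip {h : En' n → ℝ} (hC2 : ContDiff ℝ 2 h) (hsupp : HasCompactSupport h)
    (a b : En' n) : ‖fderiv ℝ h a - fderiv ℝ h b‖ ≤ supHess n h * ‖a - b‖ := by
  have hc1 : ContDiff ℝ 1 (fderiv ℝ h) := hC2.fderiv_right (by norm_num)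
  exact convex_univ.norm_image_sub_le_of_norm_fderiv_le
    (fun y _ => (hc1.differentiable (by norm_num)).differentiableAt)
    (fun y _ => hess_le hC2 hsupp y) (Set.mem_univ b) (Set.mem_univ a)

private lemma gradient_eq_toDual_symm (f : En' n → ℝ) (a : En' n) :
    gradient f a = (InnerProductSpace.toDual ℝ (En' n)).symm (fderiv ℝ f a) := rfl

private lemma grad_lip {h : En' n → ℝ} (hC2 : ContDiff ℝ 2 h) (hsupp : HasCompactSupport h)
    (a b : En' n) : ‖gradient h a - gradient h b‖ ≤ supHess n h * ‖a - b‖ := by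
  rw [gradient_eq_toDual_symm, gradient_eq_toDual_symm, ← map_sub,
    LinearIsometryEquiv.norm_map]
  exact fderiv_lip hC2 hsupp a b

private lemma inner_gradient (f : En' n → ℝ) (a v : En' n) :
    ⟪gradient f a, v⟫ = fderiv ℝ f a v := by
  rw [gradient_eq_toDual_symm]
  exact InnerProductSpace.toDual_symm_apply

private lemma taylor_bound {h : En' n → ℝ} (hC2 : ContDiff ℝ 2 h) (hsupp : HasCompactSupport h)
    (a b : En' n) : |h b - h a - ⟪gradient h a, b - a⟫| ≤ supHess n h * ‖b - a‖ ^ 2 := by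
  have hdh : Differentiable ℝ h := hC2.differentiable (by norm_num)
  set L := fderiv ℝ h a with hL
  set φ := fun y => h y - L y with hφdef
  have hφ : ∀ y, DifferentiableAt ℝ φ y := fun y => ((hdh y).sub (L.differentiable y))
  have hfd : ∀ y, fderiv ℝ φ y = fderiv ℝ h y - L := by
    intro y
    rw [hφdef, fderiv_fun_sub (hdh y) (L.differentiable y), L.fderiv]
  have hbound : ∀ y ∈ Metric.closedBall a ‖b - a‖, ‖fderiv ℝ φ y‖ ≤ supHess n h * ‖b - a‖ := by
    intro y hy
    rw [hfd y, hL]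
    refine (fderiv_lip hC2 hsupp y a).trans ?_
    have : ‖y - a‖ ≤ ‖b - a‖ := by
      have := Metric.mem_closedBall.1 hy
      rwa [dist_eq_norm] at this
    exact mul_le_mul_of_nonneg_left this (supHess_nonneg hC2 hsupp)
  have hmem_b : b ∈ Metric.closedBall a ‖b - a‖ := by
    simp [Metric.mem_closedBall, dist_eq_norm]
  have hmem_a : a ∈ Metric.closedBall a ‖b - a‖ := Metric.mem_closedBall_self (norm_nonneg _)
  have key := (convex_closedBall a ‖b - a‖).norm_image_sub_le_of_norm_fderiv_le
    (fun y _ => hφ y) hbound hmem_a hmem_b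
  have e1 : φ b - φ a = h b - h a - ⟪gradient h a, b - a⟫ := by
    rw [inner_gradient, ← hL, map_sub]
    simp only [hφdef]
    ring
  rw [e1] at key
  rw [Real.norm_eq_abs] at key
  calc |h b - h a - ⟪gradient h a, b - a⟫| ≤ supHess n h * ‖b - a‖ * ‖b - a‖ := key
    _ = supHess n h * ‖b - a‖ ^ 2 := by ring

/-! ### The boundary graph -/

private def Fc (n : ℕ) (h : En' n → ℝ) (z : En n) : ℝ := lastC n z - h (proj n z)

private lemma continuous_lastC (hn : 0 < n) : Continuous (lastC n) := by
  have e : lastC n = fun z : En n => z ⟨n - 1, Nat.sub_lt hn one_pos⟩ :=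
    funext (lastC_eq hn)
  rw [e]
  fun_prop

private lemma continuous_proj : Continuous (proj n) := by
  unfold proj; fun_prop

private lemma continuous_Fc (hn : 0 < n) {h : En' n → ℝ} (hcont : Continuous h) :
    Continuous (Fc n h) :=
  (continuous_lastC hn).sub (hcont.comp continuous_proj)

private lemma mem_bdry_iff {h : En' n → ℝ} (z : En n) :
    z ∈ bdry n h ↔ Fc n h z = 0 := by
  simp only [bdry, Set.mem_setOf_eq, Fc, sub_eq_zero]

private lemma mem_dom_iff {h : En' n → ℝ} (z : En n) :
    z ∈ dom n h ↔ 0 < Fc n h z := by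
  simp only [dom, Set.mem_setOf_eq, Fc, sub_pos]

private lemma bdry_closed (hn : 0 < n) {h : En' n → ℝ} (hcont : Continuous h) :
    IsClosed (bdry n h) := by
  have : bdry n h = Fc n h ⁻¹' {0} := Set.ext fun z => mem_bdry_iff z
  rw [this]
  exact (isClosed_singleton).preimage (continuous_Fc hn hcont)

private lemma emb_mem_bdry (hn : 0 < n) {h : En' n → ℝ} (y' : En' n) :
    emb n y' (h y') ∈ bdry n h := by
  show lastC n _ = h (proj n _)
  rw [lastC_emb hn, proj_emb]

private lemma bdry_nonempty (hn : 0 < n) {h : En' n → ℝ} : (bdry n h).Nonempty :=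
  ⟨emb n 0 (h 0), emb_mem_bdry hn 0⟩

private lemma bdry_eq_emb (hn : 0 < n) {h : En' n → ℝ} {y : En n} (hy : y ∈ bdry n h) :
    y = emb n (proj n y) (h (proj n y)) := by
  have := emb_proj_lastC hn y
  rw [show lastC n y = h (proj n y) from hy] at this
  exact this.symm

private lemma bdry_not_mem_dom {h : En' n → ℝ} {y : En n} (hy : y ∈ bdry n h) :
    y ∉ dom n h := by
  intro hmem
  have h1 : lastC n y = h (proj n y) := hy
  have h2 : h (proj n y) < lastC n y := hmem
  rw [h1] at h2
  exact lt_irrefl _ h2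

/-! ### The unit normal -/

private def nor (n : ℕ) (h : En' n → ℝ) (q' : En' n) : En n :=
  (Real.sqrt (1 + ‖gradient h q'‖ ^ 2))⁻¹ • emb n (-(gradient h q')) 1

private lemma sqrt_one_add_sq_pos (g : En' n) : 0 < Real.sqrt (1 + ‖g‖ ^ 2) :=
  Real.sqrt_pos.2 (by positivity)

private lemma one_le_sqrt_one_add_sq (g : En' n) : 1 ≤ Real.sqrt (1 + ‖g‖ ^ 2) := by
  have : Real.sqrt 1 ≤ Real.sqrt (1 + ‖g‖ ^ 2) :=
    Real.sqrt_le_sqrt (by nlinarith [sq_nonneg ‖g‖])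
  rwa [Real.sqrt_one] at this

private lemma sq_sqrt_one_add_sq (g : En' n) :
    Real.sqrt (1 + ‖g‖ ^ 2) ^ 2 = 1 + ‖g‖ ^ 2 :=
  Real.sq_sqrt (by positivity)

private lemma norm_emb_neg (hn : 0 < n) (g : En' n) :
    ‖emb n (-g) 1‖ = Real.sqrt (1 + ‖g‖ ^ 2) := by
  have e : 1 + ‖g‖ ^ 2 = ‖emb n (-g) 1‖ ^ 2 := by
    rw [norm_emb_sq hn, norm_neg]; ring
  rw [e, Real.sqrt_sq (norm_nonneg _)]

private lemma nor_norm (hn : 0 < n) {h : En' n → ℝ} (q' : En' n) : ‖nor n h q'‖ = 1 := by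
  rw [nor, norm_smul, norm_emb_neg hn, Real.norm_eq_abs,
    abs_of_nonneg (inv_nonneg.2 (Real.sqrt_nonneg _))]
  exact inv_mul_cancel₀ (ne_of_gt (sqrt_one_add_sq_pos _))

private lemma inner_nor (hn : 0 < n) {h : En' n → ℝ} (q' : En' n) (z : En n) :
    ⟪nor n h q', z⟫ = (Real.sqrt (1 + ‖gradient h q'‖ ^ 2))⁻¹ *
      (lastC n z - ⟪gradient h q', proj n z⟫) := by
  rw [nor, real_inner_smul_left, inner_emb hn, inner_neg_left]
  ring

/-! ### Tangent balls and the sandwich -/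

private lemma Fc_line (hn : 0 < n) {h : En' n → ℝ} (hC2 : ContDiff ℝ 2 h)
    (hsupp : HasCompactSupport h) (q' : En' n) (τ : ℝ) :
    |Fc n h (emb n q' (h q') + τ • nor n h q') -
      τ * Real.sqrt (1 + ‖gradient h q'‖ ^ 2)| ≤ supHess n h * τ ^ 2 := by
  set g := gradient h q' with hg
  set s := Real.sqrt (1 + ‖g‖ ^ 2) with hsdef
  set u := s⁻¹ with hu
  set z := emb n q' (h q') + τ • nor n h q' with hz
  have hspos : 0 < s := sqrt_one_add_sq_pos g
  have hs1 : 1 ≤ s := one_le_sqrt_one_add_sq g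
  have hsq : s ^ 2 = 1 + ‖g‖ ^ 2 := sq_sqrt_one_add_sq g
  have hus : u * s = 1 := inv_mul_cancel₀ (ne_of_gt hspos)
  have e_last : lastC n z = h q' + τ * u := by
    rw [hz, lastC_add hn, lastC_emb hn, lastC_smul hn, nor, lastC_smul hn, lastC_emb hn]
    ring
  have e_proj : proj n z = q' + (τ * u) • (-g) := by
    rw [hz, proj_add, proj_emb, proj_smul, nor, proj_smul, proj_emb, smul_smul]
  have tay := taylor_bound hC2 hsupp q' (proj n z)
  have e_sub : proj n z - q' = (τ * u) • (-g) := by rw [e_proj]; abel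
  have e_inner : ⟪g, proj n z - q'⟫ = -(τ * u) * ‖g‖ ^ 2 := by
    rw [e_sub, real_inner_smul_right, inner_neg_right, real_inner_self_eq_norm_sq]
    ring
  have e_nsq : ‖proj n z - q'‖ ^ 2 = (τ * u) ^ 2 * ‖g‖ ^ 2 := by
    rw [e_sub, norm_smul, norm_neg, mul_pow, Real.norm_eq_abs, sq_abs]
  rw [← hg, e_inner, e_nsq] at tay
  have hH : 0 ≤ supHess n h := supHess_nonneg hC2 hsupp
  have e_Fc : Fc n h z = τ * u - (h (proj n z) - h q') := by
    rw [Fc, e_last]; ring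
  have key : Fc n h z - τ * s = -(h (proj n z) - h q' - -(τ * u) * ‖g‖ ^ 2) := by
    rw [e_Fc]
    have : τ * u * (1 + ‖g‖ ^ 2) = τ * s := by
      rw [← hsq]
      calc τ * u * s ^ 2 = τ * s * (u * s) := by ring
        _ = τ * s := by rw [hus]; ring
    nlinarith [this]
  rw [key, abs_neg]
  refine tay.trans ?_
  have h1 : (τ * u) ^ 2 * ‖g‖ ^ 2 ≤ τ ^ 2 := by
    have h2 : (τ * u) ^ 2 * ‖g‖ ^ 2 ≤ (τ * u) ^ 2 * s ^ 2 := by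
      nlinarith [sq_nonneg (τ * u)]
    have h3 : (τ * u) ^ 2 * s ^ 2 = τ ^ 2 := by
      calc (τ * u) ^ 2 * s ^ 2 = τ ^ 2 * (u * s) ^ 2 := by ring
        _ = τ ^ 2 := by rw [hus]; ring
    linarith
  exact mul_le_mul_of_nonneg_left h1 hH

private lemma Fc_pos_of (hn : 0 < n) {h : En' n → ℝ} (hC2 : ContDiff ℝ 2 h)
    (hsupp : HasCompactSupport h) (q' : En' n) {τ : ℝ} (hτ0 : 0 < τ)
    (hτH : τ * supHess n h < 1) :
    0 < Fc n h (emb n q' (h q') + τ • nor n h q') := by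
  have key := Fc_line hn hC2 hsupp q' τ
  have hs1 : 1 ≤ Real.sqrt (1 + ‖gradient h q'‖ ^ 2) := one_le_sqrt_one_add_sq _
  have h1 : τ * 1 ≤ τ * Real.sqrt (1 + ‖gradient h q'‖ ^ 2) :=
    mul_le_mul_of_nonneg_left hs1 hτ0.le
  have h2 : supHess n h * τ ^ 2 < τ := by nlinarith
  have := abs_le.1 key
  linarith [this.1]

private lemma Fc_neg_of (hn : 0 < n) {h : En' n → ℝ} (hC2 : ContDiff ℝ 2 h)
    (hsupp : HasCompactSupport h) (q' : En' n) {τ : ℝ} (hτ0 : τ < 0)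
    (hτH : |τ| * supHess n h < 1) :
    Fc n h (emb n q' (h q') + τ • nor n h q') < 0 := by
  have key := Fc_line hn hC2 hsupp q' τ
  have hs1 : 1 ≤ Real.sqrt (1 + ‖gradient h q'‖ ^ 2) := one_le_sqrt_one_add_sq _
  have h1 : τ * Real.sqrt (1 + ‖gradient h q'‖ ^ 2) ≤ τ * 1 := by
    apply mul_le_mul_of_nonpos_left hs1 hτ0.le
  have habs : |τ| = -τ := abs_of_neg hτ0
  rw [habs] at hτH
  have h2 : supHess n h * τ ^ 2 < -τ := by
    nlinarith [mul_lt_mul_of_pos_right hτH (neg_pos.2 hτ0)]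
  have := abs_le.1 key
  linarith [this.2]

private lemma ball_dist (hn : 0 < n) {h : En' n → ℝ} (hC2 : ContDiff ℝ 2 h)
    (hsupp : HasCompactSupport h) (q' y' : En' n) (τ : ℝ)
    (hτH : |τ| * supHess n h ≤ 1 / 2) :
    |τ| ≤ ‖emb n q' (h q') + τ • nor n h q' - emb n y' (h y')‖ := by
  set g := gradient h q' with hg
  set s := Real.sqrt (1 + ‖g‖ ^ 2) with hsdef
  have hspos : 0 < s := sqrt_one_add_sq_pos g
  have hs1 : 1 ≤ s := one_le_sqrt_one_add_sq g
  have hH : 0 ≤ supHess n h := supHess_nonneg hC2 hsupp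
  set a := emb n q' (h q') - emb n y' (h y') with ha
  have e_re : emb n q' (h q') + τ • nor n h q' - emb n y' (h y') = a + τ • nor n h q' := by
    rw [ha]; abel
  have e_a : a = emb n (q' - y') (h q' - h y') := emb_sub _ _ _ _
  have e_nsq : ‖a‖ ^ 2 = ‖q' - y'‖ ^ 2 + (h q' - h y') ^ 2 := by
    rw [e_a, norm_emb_sq hn]
  have e_inner : ⟪nor n h q', a⟫ = s⁻¹ * ((h q' - h y') - ⟪g, q' - y'⟫) := by
    rw [inner_nor hn, e_a, lastC_emb hn, proj_emb, ← hg, ← hsdef]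
  -- Taylor bound on the deviation
  have tay := taylor_bound hC2 hsupp q' y'
  have e_dev : (h q' - h y') - ⟪g, q' - y'⟫ = -(h y' - h q' - ⟪g, y' - q'⟫) := by
    have : ⟪g, q' - y'⟫ = -⟪g, y' - q'⟫ := by
      rw [show q' - y' = -(y' - q') by abel, inner_neg_right]
    rw [this]; ring
  have hdev : |(h q' - h y') - ⟪g, q' - y'⟫| ≤ supHess n h * ‖q' - y'‖ ^ 2 := by
    rw [e_dev, abs_neg, norm_sub_rev y' q'] at *
    exact tay
  -- expand the square
  have expand : ‖a + τ • nor n h q'‖ ^ 2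
      = ‖a‖ ^ 2 + 2 * (τ * ⟪nor n h q', a⟫) + τ ^ 2 := by
    rw [norm_add_sq_real, real_inner_smul_right, norm_smul, nor_norm hn, Real.norm_eq_abs,
      real_inner_comm a (nor n h q'), mul_one, sq_abs]
  have hbound : |τ * ⟪nor n h q', a⟫| ≤ (1 / 2) * ‖q' - y'‖ ^ 2 := by
    rw [e_inner, abs_mul, abs_mul, abs_of_nonneg (inv_nonneg.2 hspos.le)]
    have hinv1 : s⁻¹ ≤ 1 := by
      rw [inv_le_one_iff₀]; right; exact hs1
    calc |τ| * (s⁻¹ * |(h q' - h y') - ⟪g, q' - y'⟫|)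
        ≤ |τ| * (1 * (supHess n h * ‖q' - y'‖ ^ 2)) := by
          apply mul_le_mul_of_nonneg_left _ (abs_nonneg τ)
          apply mul_le_mul hinv1 hdev (abs_nonneg _) zero_le_one
      _ = (|τ| * supHess n h) * ‖q' - y'‖ ^ 2 := by ring
      _ ≤ (1 / 2) * ‖q' - y'‖ ^ 2 := by
          apply mul_le_mul_of_nonneg_right hτH (sq_nonneg _)
  have habs := abs_le.1 hbound
  have hsq_ge : τ ^ 2 ≤ ‖a + τ • nor n h q'‖ ^ 2 := by
    rw [expand, e_nsq]
    nlinarith [sq_nonneg (h q' - h y')]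
  rw [e_re]
  calc |τ| = Real.sqrt (τ ^ 2) := (Real.sqrt_sq_eq_abs τ).symm
    _ ≤ Real.sqrt (‖a + τ • nor n h q'‖ ^ 2) := Real.sqrt_le_sqrt hsq_ge
    _ = ‖a + τ • nor n h q'‖ := Real.sqrt_sq (norm_nonneg _)

/-! ### Crossing the boundary -/

private lemma le_infDist_of {s : Set (En n)} (hs : s.Nonempty) {b : ℝ} {x : En n}
    (hb : ∀ y ∈ s, b ≤ dist x y) : b ≤ Metric.infDist x s := by
  by_contra hlt
  push_neg at hlt
  obtain ⟨y, hy, hd⟩ := (Metric.infDist_lt_iff hs).1 hlt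
  exact absurd hd (not_lt.2 (hb y hy))

private lemma crossing (hn : 0 < n) {h : En' n → ℝ} (hcont : Continuous h) {z c : En n}
    (hz : Fc n h z ≤ 0) (hc : 0 < Fc n h c) :
    ∃ w ∈ bdry n h, ‖z - w‖ + ‖w - c‖ = ‖z - c‖ := by
  set φ := fun t : ℝ => Fc n h (z + t • (c - z)) with hφ
  have hφc : ContinuousOn φ (Set.Icc 0 1) := by
    apply Continuous.continuousOn
    exact (continuous_Fc hn hcont).comp (continuous_const.add (continuous_id.smul continuous_const))
  have h0 : φ 0 = Fc n h z := by simp [hφ]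
  have h1 : φ 1 = Fc n h c := by simp [hφ]
  have hmem : (0 : ℝ) ∈ Set.Icc (φ 0) (φ 1) := by
    rw [h0, h1]; exact ⟨hz, hc.le⟩
  obtain ⟨t, ht, hφt⟩ := intermediate_value_Icc zero_le_one hφc hmem
  refine ⟨z + t • (c - z), (mem_bdry_iff _).2 hφt, ?_⟩
  have e1 : z - (z + t • (c - z)) = (-t) • (c - z) := by
    rw [neg_smul]; abel
  have e2 : z + t • (c - z) - c = -((1 - t) • (c - z)) := by
    rw [sub_smul, one_smul]; abel
  rw [e1, e2, norm_neg, norm_smul, norm_smul, norm_neg, Real.norm_eq_abs, Real.norm_eq_abs,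
    abs_of_nonneg ht.1, abs_of_nonneg (by linarith [ht.2] : (0:ℝ) ≤ 1 - t),
    show z - c = -(c - z) by abel, norm_neg]
  ring

/-! ### The sandwich bounds for the signed distance -/

private lemma sdist_ge_aux (hn : 0 < n) {h : En' n → ℝ} (hC2 : ContDiff ℝ 2 h)
    (hsupp : HasCompactSupport h) (q' : En' n) {ρ : ℝ} (hρ0 : 0 < ρ)
    (hρH : ρ * supHess n h ≤ 1 / 2) (z : En n) :
    ρ - ‖z - (emb n q' (h q') + ρ • nor n h q')‖ ≤ sdist n h z := by
  set c := emb n q' (h q') + ρ • nor n h q' with hc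
  have hball : ∀ y ∈ bdry n h, ρ ≤ ‖c - y‖ := by
    intro y hy
    have := ball_dist hn hC2 hsupp q' (proj n y) ρ (by rwa [abs_of_pos hρ0])
    rw [← bdry_eq_emb hn hy] at this
    rwa [abs_of_pos hρ0] at this
  by_cases hzdom : z ∈ dom n h
  · rw [sdist, if_pos hzdom]
    by_cases hfar : ρ ≤ ‖z - c‖
    · linarith [Metric.infDist_nonneg (s := bdry n h) (x := z)]
    · apply le_infDist_of (bdry_nonempty hn)
      intro y hy
      have htri : dist c y ≤ dist c z + dist z y := dist_triangle c z y
      rw [dist_eq_norm, dist_eq_norm, dist_eq_norm] at *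
      have h1 : ρ ≤ ‖c - y‖ := hball y hy
      have h2 : ‖c - z‖ = ‖z - c‖ := norm_sub_rev c z
      linarith
  · rw [sdist, if_neg hzdom]
    have hzF : Fc n h z ≤ 0 := by
      rw [mem_dom_iff] at hzdom
      linarith [not_lt.1 hzdom]
    have hcF : 0 < Fc n h c := Fc_pos_of hn hC2 hsupp q' hρ0 (by nlinarith)
    obtain ⟨w, hw, hsum⟩ := crossing hn hC2.continuous hzF hcF
    have h1 : ρ ≤ ‖w - c‖ := by
      have := hball w hw
      rwa [norm_sub_rev] at this
    have h2 : Metric.infDist z (bdry n h) ≤ ‖z - w‖ := by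
      rw [← dist_eq_norm]
      exact Metric.infDist_le_dist_of_mem hw
    linarith

private lemma sdist_le_aux (hn : 0 < n) {h : En' n → ℝ} (hC2 : ContDiff ℝ 2 h)
    (hsupp : HasCompactSupport h) (q' : En' n) {ρ : ℝ} (hρ0 : 0 < ρ)
    (hρH : ρ * supHess n h ≤ 1 / 2) (z : En n) :
    sdist n h z ≤ ‖z - (emb n q' (h q') + (-ρ) • nor n h q')‖ - ρ := by
  set c := emb n q' (h q') + (-ρ) • nor n h q' with hc
  have hball : ∀ y ∈ bdry n h, ρ ≤ ‖c - y‖ := by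
    intro y hy
    have := ball_dist hn hC2 hsupp q' (proj n y) (-ρ)
      (by rwa [abs_neg, abs_of_pos hρ0])
    rw [← bdry_eq_emb hn hy] at this
    rwa [abs_neg, abs_of_pos hρ0] at this
  by_cases hzdom : z ∈ dom n h
  · rw [sdist, if_pos hzdom]
    have hzF : 0 < Fc n h z := (mem_dom_iff z).1 hzdom
    have hcF : Fc n h c < 0 := by
      apply Fc_neg_of hn hC2 hsupp q' (by linarith : -ρ < 0)
      rw [abs_neg, abs_of_pos hρ0]; nlinarith
    obtain ⟨w, hw, hsum⟩ := crossing hn hC2.continuous hcF.le hzF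
    have h1 : ρ ≤ ‖c - w‖ := hball w hw
    have h2 : Metric.infDist z (bdry n h) ≤ ‖w - z‖ := by
      rw [← dist_eq_norm, dist_comm]
      exact Metric.infDist_le_dist_of_mem hw
    have h3 : ‖c - z‖ = ‖z - c‖ := norm_sub_rev c z
    linarith
  · rw [sdist, if_neg hzdom]
    by_cases hfar : ρ ≤ ‖z - c‖
    · have h0 : 0 ≤ Metric.infDist z (bdry n h) := Metric.infDist_nonneg
      linarith
    · have hclose : ρ - ‖z - c‖ ≤ Metric.infDist z (bdry n h) := by
        apply le_infDist_of (bdry_nonempty hn)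
        intro y hy
        have htri : dist c y ≤ dist c z + dist z y := dist_triangle c z y
        rw [dist_eq_norm, dist_eq_norm, dist_eq_norm] at *
        have h1 : ρ ≤ ‖c - y‖ := hball y hy
        have h2 : ‖c - z‖ = ‖z - c‖ := norm_sub_rev c z
        linarith
      linarith

/-! ### A squeeze lemma for derivatives -/

private lemma gradient_eq_toDual_symm' {E : Type*} [NormedAddCommGroup E]
    [InnerProductSpace ℝ E] [CompleteSpace E] (f : E → ℝ) (a : E) :
    gradient f a = (InnerProductSpace.toDual ℝ E).symm (fderiv ℝ f a) := rfl

private lemma squeeze_hasFDerivAt {E : Type*} [NormedAddCommGroup E] [NormedSpace ℝ E]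
    {f g₁ g₂ : E → ℝ} {L : E →L[ℝ] ℝ} {x : E}
    (hle₁ : ∀ z, g₁ z ≤ f z) (hle₂ : ∀ z, f z ≤ g₂ z)
    (he₁ : g₁ x = f x) (he₂ : g₂ x = f x)
    (hd₁ : HasFDerivAt g₁ L x) (hd₂ : HasFDerivAt g₂ L x) : HasFDerivAt f L x := by
  have a₁ := Asymptotics.isLittleO_iff.1 (hasFDerivAt_iff_isLittleO.1 hd₁)
  have a₂ := Asymptotics.isLittleO_iff.1 (hasFDerivAt_iff_isLittleO.1 hd₂)
  show HasFDerivAt f L x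
  refine hasFDerivAt_iff_isLittleO.2 (Asymptotics.isLittleO_iff.2 ?_)
  intro c hc
  have hc2 : 0 < c / 2 := half_pos hc
  filter_upwards [a₁ hc2, a₂ hc2] with z h1 h2
  rw [Real.norm_eq_abs] at h1 h2 ⊢
  rw [he₁] at h1
  rw [he₂] at h2
  have hA := hle₁ z
  have hB := hle₂ z
  have n0 : 0 ≤ ‖z - x‖ := norm_nonneg _
  have l1 := abs_le.1 h1
  have l2 := abs_le.1 h2
  have hn0 : 0 ≤ c / 2 * ‖z - x‖ := mul_nonneg hc2.le n0
  rw [abs_le]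
  constructor
  · nlinarith [l1.1]
  · nlinarith [l2.2]

/-! ### Derivative of the norm in an inner product space -/

private lemma hasFDerivAt_norm_sub {E : Type*} [NormedAddCommGroup E]
    [InnerProductSpace ℝ E] [CompleteSpace E] (c x : E) (hx : x ≠ c) :
    HasFDerivAt (fun z => ‖z - c‖)
      ((InnerProductSpace.toDual ℝ E) (‖x - c‖⁻¹ • (x - c))) x := by
  have hne : x - c ≠ 0 := sub_ne_zero.2 hx
  have hnorm : (0:ℝ) < ‖x - c‖ := norm_pos_iff.2 hne
  have hsub : HasFDerivAt (fun z : E => z - c) (ContinuousLinearMap.id ℝ E) x :=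
    (hasFDerivAt_id x).sub_const c
  have hI := HasFDerivAt.inner ℝ hsub hsub
  have ht0 : ⟪x - c, x - c⟫ ≠ 0 := by
    rw [real_inner_self_eq_norm_sq]
    positivity
  have hs : HasDerivAt Real.sqrt (1 / (2 * Real.sqrt ⟪x - c, x - c⟫)) ⟪x - c, x - c⟫ :=
    Real.hasDerivAt_sqrt ht0
  have comp := hs.comp_hasFDerivAt x hI
  have efun : (Real.sqrt ∘ fun z : E => ⟪z - c, z - c⟫) = fun z : E => ‖z - c‖ := by
    funext z
    rw [Function.comp_apply, real_inner_self_eq_norm_sq, Real.sqrt_sq (norm_nonneg _)]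
  rw [efun] at comp
  refine comp.congr_fderiv ?_
  ext v
  rw [ContinuousLinearMap.smul_apply, ContinuousLinearMap.comp_apply,
    ContinuousLinearMap.prod_apply, ContinuousLinearMap.id_apply, fderivInnerCLM_apply,
    InnerProductSpace.toDual_apply_apply, real_inner_smul_left]
  rw [real_inner_self_eq_norm_sq, Real.sqrt_sq (norm_nonneg _),
    real_inner_comm v (x - c)]
  field_simp
  rw [smul_eq_mul, ← mul_assoc, mul_one_div, div_mul_eq_mul_div,
    div_eq_iff (mul_pos two_pos hnorm).ne']
  ring

/-! ### The signed distance is 1-Lipschitz -/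

private lemma sdist_lipschitz (hn : 0 < n) {h : En' n → ℝ} (hcont : Continuous h) :
    LipschitzWith 1 (sdist n h) := by
  apply LipschitzWith.of_dist_le_mul
  intro a b
  rw [Real.dist_eq, NNReal.coe_one, one_mul, dist_eq_norm]
  have hnab : ‖b - a‖ = ‖a - b‖ := norm_sub_rev b a
  have d0a : 0 ≤ Metric.infDist a (bdry n h) := Metric.infDist_nonneg
  have d0b : 0 ≤ Metric.infDist b (bdry n h) := Metric.infDist_nonneg
  by_cases ha : a ∈ dom n h <;> by_cases hb : b ∈ dom n h
  · rw [sdist, sdist, if_pos ha, if_pos hb]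
    have l1 := Metric.infDist_le_infDist_add_dist (x := a) (y := b) (s := bdry n h)
    have l2 := Metric.infDist_le_infDist_add_dist (x := b) (y := a) (s := bdry n h)
    rw [dist_eq_norm] at l1 l2
    rw [abs_le]
    constructor <;> [linarith [l2, hnab]; linarith [l1, hnab]]
  · -- a in, b out
    rw [sdist, sdist, if_pos ha, if_neg hb]
    have hbF : Fc n h b ≤ 0 := not_lt.1 (fun hlt => hb ((mem_dom_iff b).2 hlt))
    have haF : 0 < Fc n h a := (mem_dom_iff a).1 ha
    obtain ⟨w, hw, hsum⟩ := crossing hn hcont hbF haF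
    have h1 : Metric.infDist a (bdry n h) ≤ ‖w - a‖ := by
      rw [← dist_eq_norm, dist_comm]
      exact Metric.infDist_le_dist_of_mem hw
    have h2 : Metric.infDist b (bdry n h) ≤ ‖b - w‖ := by
      rw [← dist_eq_norm]
      exact Metric.infDist_le_dist_of_mem hw
    rw [abs_le]
    constructor <;> [linarith; linarith]
  · -- a out, b in
    rw [sdist, sdist, if_neg ha, if_pos hb]
    have haF : Fc n h a ≤ 0 := not_lt.1 (fun hlt => ha ((mem_dom_iff a).2 hlt))
    have hbF : 0 < Fc n h b := (mem_dom_iff b).1 hb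
    obtain ⟨w, hw, hsum⟩ := crossing hn hcont haF hbF
    have h1 : Metric.infDist a (bdry n h) ≤ ‖a - w‖ := by
      rw [← dist_eq_norm]
      exact Metric.infDist_le_dist_of_mem hw
    have h2 : Metric.infDist b (bdry n h) ≤ ‖w - b‖ := by
      rw [← dist_eq_norm, dist_comm]
      exact Metric.infDist_le_dist_of_mem hw
    rw [abs_le]
    constructor <;> [linarith; linarith]
  · rw [sdist, sdist, if_neg ha, if_neg hb]
    have l1 := Metric.infDist_le_infDist_add_dist (x := a) (y := b) (s := bdry n h)
    have l2 := Metric.infDist_le_infDist_add_dist (x := b) (y := a) (s := bdry n h)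
    rw [dist_eq_norm] at l1 l2
    rw [abs_le]
    constructor <;> [linarith [l1, hnab]; linarith [l2, hnab]]

private lemma norm_gradient_sdist_le_one (hn : 0 < n) {h : En' n → ℝ}
    (hcont : Continuous h) (z : En n) : ‖gradient (sdist n h) z‖ ≤ 1 := by
  by_cases hd : DifferentiableAt ℝ (sdist n h) z
  · rw [gradient_eq_toDual_symm', LinearIsometryEquiv.norm_map]
    have := norm_fderiv_le_of_lipschitz ℝ (x₀ := z) (sdist_lipschitz hn hcont)
    simpa using this
  · rw [gradient_eq_zero_of_not_differentiableAt hd, norm_zero]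
    norm_num

/-! ### Foot points -/

private lemma exists_foot (hn : 0 < n) {h : En' n → ℝ} (hC2 : ContDiff ℝ 2 h) (x : En n) :
    ∃ q' : En' n, ‖x - emb n q' (h q')‖ = Metric.infDist x (bdry n h) ∧
      x = emb n q' (h q') +
        ((lastC n x - h q') * Real.sqrt (1 + ‖gradient h q'‖ ^ 2)) • nor n h q' := by
  obtain ⟨y₀, hy₀, hdist⟩ :=
    (bdry_closed hn hC2.continuous).exists_infDist_eq_dist (bdry_nonempty hn) x
  set q' := proj n y₀ with hq'
  have hy₀e : y₀ = emb n q' (h q') := bdry_eq_emb hn hy₀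
  have hsub : ∀ y' : En' n, x - emb n y' (h y') = emb n (proj n x - y') (lastC n x - h y') := by
    intro y'
    conv_lhs => rw [← emb_proj_lastC hn x]
    exact emb_sub _ _ _ _
  have hdx : ‖x - emb n q' (h q')‖ = Metric.infDist x (bdry n h) := by
    rw [← hy₀e, ← dist_eq_norm, hdist]
  refine ⟨q', hdx, ?_⟩
  -- the squared distance function
  set G := fun y' : En' n => ⟪proj n x - y', proj n x - y'⟫ +
    (lastC n x - h y') * (lastC n x - h y') with hG
  have hGF : ∀ y', G y' = ‖x - emb n y' (h y')‖ ^ 2 := by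
    intro y'
    simp only [hG]
    rw [hsub y', norm_emb_sq hn, real_inner_self_eq_norm_sq]
    ring
  have hmin : IsLocalMin G q' := by
    apply Filter.Eventually.of_forall
    intro y'
    rw [hGF, hGF]
    have h1 : ‖x - emb n q' (h q')‖ ≤ ‖x - emb n y' (h y')‖ := by
      rw [hdx, ← dist_eq_norm]
      exact Metric.infDist_le_dist_of_mem (emb_mem_bdry hn y')
    exact pow_le_pow_left₀ (norm_nonneg _) h1 2
  -- derivative of G
  set p := proj n x - q' with hp
  set t := lastC n x - h q' with ht
  have hs1 : HasFDerivAt (fun y' : En' n => proj n x - y')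
      (-(ContinuousLinearMap.id ℝ (En' n))) q' := (hasFDerivAt_id q').const_sub (proj n x)
  have hI := HasFDerivAt.inner ℝ hs1 hs1
  have hh : HasFDerivAt (fun y' : En' n => lastC n x - h y') (-(fderiv ℝ h q')) q' :=
    ((hC2.differentiable (by norm_num) q').hasFDerivAt).const_sub (lastC n x)
  have hM := hh.mul hh
  have hGd : HasFDerivAt G _ q' := hI.add hM
  have hfd0 := hmin.fderiv_eq_zero
  rw [hGd.fderiv] at hfd0
  -- evaluate at the critical direction
  have hcrit : ∀ v : En' n, ⟪p + t • gradient h q', v⟫ = 0 := by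
    intro v
    have this0 := congrArg (fun (L : En' n →L[ℝ] ℝ) => L v) hfd0
    simp only [ContinuousLinearMap.add_apply, ContinuousLinearMap.comp_apply,
      ContinuousLinearMap.prod_apply, ContinuousLinearMap.neg_apply,
      ContinuousLinearMap.id_apply, fderivInnerCLM_apply, ContinuousLinearMap.zero_apply,
      ContinuousLinearMap.smul_apply, smul_eq_mul, inner_neg_right, inner_neg_left,
      mul_neg, neg_neg] at this0
    rw [← hp, ← ht] at this0
    have hgv : fderiv ℝ h q' v = ⟪gradient h q', v⟫ := (inner_gradient h q' v).symm
    rw [inner_add_left, real_inner_smul_left, ← hgv]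
    have hvp : ⟪p, v⟫ = ⟪v, p⟫ := real_inner_comm v p
    linarith [this0, hvp]
  have hpt : p + t • gradient h q' = 0 := by
    have := hcrit (p + t • gradient h q')
    exact inner_self_eq_zero.1 this
  have hpeq : proj n x - q' = -(t • gradient h q') := by
    rw [← hp]; linear_combination (norm := module) hpt
  -- assemble
  have hτν : ((lastC n x - h q') * Real.sqrt (1 + ‖gradient h q'‖ ^ 2)) • nor n h q'
      = emb n (-(t • gradient h q')) t := by
    rw [nor, smul_smul, ← ht]
    have hsne : Real.sqrt (1 + ‖gradient h q'‖ ^ 2) ≠ 0 := ne_of_gt (sqrt_one_add_sq_pos _)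
    rw [mul_assoc, mul_inv_cancel₀ hsne, mul_one, emb_smul, smul_neg, mul_one]
  rw [hτν]
  have : x - emb n q' (h q') = emb n (-(t • gradient h q')) t := by
    rw [hsub q', hpeq, ← ht]
  rw [← this]
  abel

/-! ### The signed distance along a normal segment -/

private lemma sdist_of_normal (hn : 0 < n) {h : En' n → ℝ} (hC2 : ContDiff ℝ 2 h)
    (hsupp : HasCompactSupport h) (q' : En' n) {τ : ℝ}
    (hτd : Metric.infDist (emb n q' (h q') + τ • nor n h q') (bdry n h) = |τ|)
    (hτH : |τ| * supHess n h < 1) :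
    sdist n h (emb n q' (h q') + τ • nor n h q') = τ := by
  set z := emb n q' (h q') + τ • nor n h q' with hz
  rcases lt_trichotomy τ 0 with hτ | hτ | hτ
  · have hzF : Fc n h z < 0 := Fc_neg_of hn hC2 hsupp q' hτ hτH
    have hznd : z ∉ dom n h := fun hmem => absurd ((mem_dom_iff z).1 hmem) (by linarith)
    rw [sdist, if_neg hznd, hτd, abs_of_neg hτ, neg_neg]
  · have hzb : z ∈ bdry n h := by
      rw [hz, hτ, zero_smul, add_zero]
      exact emb_mem_bdry hn q'
    rw [sdist, if_neg (bdry_not_mem_dom hzb), hτd, hτ, abs_zero, neg_zero]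
  · have hzF : 0 < Fc n h z := Fc_pos_of hn hC2 hsupp q' hτ (by rwa [abs_of_pos hτ] at hτH)
    rw [sdist, if_pos ((mem_dom_iff z).2 hzF), hτd, abs_of_pos hτ]

/-! ### Differentiability of the signed distance with gradient the unit normal -/

private lemma hasGradientAt_sdist (hn : 0 < n) {h : En' n → ℝ} (hC2 : ContDiff ℝ 2 h)
    (hsupp : HasCompactSupport h) (hH : 0 < supHess n h) (q' : En' n) {τ : ℝ}
    (hτd : Metric.infDist (emb n q' (h q') + τ • nor n h q') (bdry n h) = |τ|)
    (hτH : |τ| * supHess n h < 1 / 2) :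
    HasGradientAt (sdist n h) (nor n h q') (emb n q' (h q') + τ • nor n h q') := by
  set ρ : ℝ := (2 * supHess n h)⁻¹ with hρ
  have hρ0 : 0 < ρ := by positivity
  have hρH : ρ * supHess n h = 1 / 2 := by
    rw [hρ]
    field_simp
  have hτρ : |τ| < ρ := by
    have := hτH
    rw [← hρH] at this
    exact lt_of_mul_lt_mul_right this hH.le
  have hτle : τ < ρ := lt_of_le_of_lt (le_abs_self τ) hτρ
  have hτge : -ρ < τ := by
    have := neg_abs_le τ
    linarith
  set x := emb n q' (h q') + τ • nor n h q' with hx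
  set cp := emb n q' (h q') + ρ • nor n h q' with hcp
  set cm := emb n q' (h q') + (-ρ) • nor n h q' with hcm
  have hνn : ‖nor n h q'‖ = 1 := nor_norm hn q'
  have excp : x - cp = (τ - ρ) • nor n h q' := by
    rw [hx, hcp, sub_smul]
    abel
  have excm : x - cm = (τ + ρ) • nor n h q' := by
    rw [hx, hcm, add_smul, neg_smul]
    abel
  have hncp : ‖x - cp‖ = ρ - τ := by
    rw [excp, norm_smul, hνn, mul_one, Real.norm_eq_abs, abs_of_neg (by linarith), neg_sub]
  have hncm : ‖x - cm‖ = τ + ρ := by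
    rw [excm, norm_smul, hνn, mul_one, Real.norm_eq_abs, abs_of_pos (by linarith)]
  have hsd : sdist n h x = τ :=
    sdist_of_normal hn hC2 hsupp q' hτd (lt_trans hτH (by norm_num))
  have hxcp : x ≠ cp := by
    intro he
    rw [he, sub_self, norm_zero] at hncp
    linarith
  have hxcm : x ≠ cm := by
    intro he
    rw [he, sub_self, norm_zero] at hncm
    linarith
  -- the two touching smooth bounds
  have d1n := hasFDerivAt_norm_sub cp x hxcp
  have d2n := hasFDerivAt_norm_sub cm x hxcm
  have ev1 : ‖x - cp‖⁻¹ • (x - cp) = -(nor n h q') := by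
    rw [hncp, excp, smul_smul]
    have : (ρ - τ)⁻¹ * (τ - ρ) = -1 := by
      have hne : ρ - τ ≠ 0 := by linarith
      rw [show τ - ρ = -(ρ - τ) by ring, mul_neg, inv_mul_cancel₀ hne]
    rw [this, neg_one_smul]
  have ev2 : ‖x - cm‖⁻¹ • (x - cm) = nor n h q' := by
    rw [hncm, excm, smul_smul]
    have hne : τ + ρ ≠ 0 := by linarith
    rw [inv_mul_cancel₀ hne, one_smul]
  have d1 : HasFDerivAt (fun z : En n => ρ - ‖z - cp‖)
      ((InnerProductSpace.toDual ℝ (En n)) (nor n h q')) x := by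
    have := d1n.const_sub ρ
    rw [ev1] at this
    have e : -((InnerProductSpace.toDual ℝ (En n)) (-(nor n h q')))
        = (InnerProductSpace.toDual ℝ (En n)) (nor n h q') := by
      rw [map_neg, neg_neg]
    rwa [e] at this
  have d2 : HasFDerivAt (fun z : En n => ‖z - cm‖ - ρ)
      ((InnerProductSpace.toDual ℝ (En n)) (nor n h q')) x := by
    have := d2n.sub_const ρ
    rwa [ev2] at this
  have hle₁ : ∀ z, ρ - ‖z - cp‖ ≤ sdist n h z := fun z =>
    sdist_ge_aux hn hC2 hsupp q' hρ0 hρH.le z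
  have hle₂ : ∀ z, sdist n h z ≤ ‖z - cm‖ - ρ := fun z =>
    sdist_le_aux hn hC2 hsupp q' hρ0 hρH.le z
  have he₁ : ρ - ‖x - cp‖ = sdist n h x := by rw [hncp, hsd]; ring
  have he₂ : ‖x - cm‖ - ρ = sdist n h x := by rw [hncm, hsd]; ring
  have key : HasFDerivAt (sdist n h)
      ((InnerProductSpace.toDual ℝ (En n)) (nor n h q')) x :=
    squeeze_hasFDerivAt hle₁ hle₂ he₁ he₂ d1 d2
  exact hasGradientAt_iff_hasFDerivAt.2 key

/-! ### Lipschitz estimate for the unit normal -/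

private lemma unit_diff {E : Type*} [NormedAddCommGroup E] [NormedSpace ℝ E]
    (a b : E) (ha : 1 ≤ ‖a‖) (hb : 1 ≤ ‖b‖) :
    ‖‖a‖⁻¹ • a - ‖b‖⁻¹ • b‖ ≤ 2 * ‖a - b‖ := by
  have ha0 : (0:ℝ) < ‖a‖ := lt_of_lt_of_le one_pos ha
  have hb0 : (0:ℝ) < ‖b‖ := lt_of_lt_of_le one_pos hb
  have e : ‖a‖⁻¹ • a - ‖b‖⁻¹ • b = ‖a‖⁻¹ • (a - b) + (‖a‖⁻¹ - ‖b‖⁻¹) • b := by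
    rw [smul_sub, sub_smul]
    abel
  rw [e]
  refine (norm_add_le _ _).trans ?_
  rw [norm_smul, norm_smul, Real.norm_eq_abs, Real.norm_eq_abs,
    abs_of_pos (inv_pos.2 ha0)]
  have hinva : ‖a‖⁻¹ ≤ 1 := by
    rw [inv_le_one_iff₀]; right; exact ha
  have t1 : ‖a‖⁻¹ * ‖a - b‖ ≤ ‖a - b‖ := by
    nlinarith [norm_nonneg (a - b)]
  have hdiff : ‖a‖⁻¹ - ‖b‖⁻¹ = (‖b‖ - ‖a‖) * (‖a‖⁻¹ * ‖b‖⁻¹) := by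
    field_simp
  have t2 : |‖a‖⁻¹ - ‖b‖⁻¹| * ‖b‖ ≤ ‖a - b‖ := by
    rw [hdiff, abs_mul, abs_of_pos (by positivity : (0:ℝ) < ‖a‖⁻¹ * ‖b‖⁻¹)]
    have h1 : |‖b‖ - ‖a‖| ≤ ‖a - b‖ := by
      have := abs_norm_sub_norm_le b a
      rwa [norm_sub_rev] at this
    calc |‖b‖ - ‖a‖| * (‖a‖⁻¹ * ‖b‖⁻¹) * ‖b‖
        = |‖b‖ - ‖a‖| * ‖a‖⁻¹ * (‖b‖⁻¹ * ‖b‖) := by ring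
      _ = |‖b‖ - ‖a‖| * ‖a‖⁻¹ := by rw [inv_mul_cancel₀ (ne_of_gt hb0), mul_one]
      _ ≤ |‖b‖ - ‖a‖| * 1 := by
          apply mul_le_mul_of_nonneg_left hinva (abs_nonneg _)
      _ ≤ ‖a - b‖ := by rw [mul_one]; exact h1
  linarith

private lemma norm_emb_zero (hn : 0 < n) (w : En' n) : ‖emb n w (0:ℝ)‖ = ‖w‖ := by
  have h2 : ‖emb n w (0:ℝ)‖ ^ 2 = ‖w‖ ^ 2 := by
    rw [norm_emb_sq hn]
    ring
  rw [← Real.sqrt_sq (norm_nonneg (emb n w (0:ℝ))), h2, Real.sqrt_sq (norm_nonneg w)]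

private lemma nor_lip (hn : 0 < n) {h : En' n → ℝ} (hC2 : ContDiff ℝ 2 h)
    (hsupp : HasCompactSupport h) (p' q' : En' n) :
    ‖nor n h p' - nor n h q'‖ ≤ 2 * supHess n h * ‖p' - q'‖ := by
  set a := emb n (-(gradient h p')) 1 with hadef
  set b := emb n (-(gradient h q')) 1 with hbdef
  have hna : ‖a‖ = Real.sqrt (1 + ‖gradient h p'‖ ^ 2) := norm_emb_neg hn _
  have hnb : ‖b‖ = Real.sqrt (1 + ‖gradient h q'‖ ^ 2) := norm_emb_neg hn _
  have ea : nor n h p' = ‖a‖⁻¹ • a := by rw [nor, hna]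
  have eb : nor n h q' = ‖b‖⁻¹ • b := by rw [nor, hnb]
  have ha1 : 1 ≤ ‖a‖ := by rw [hna]; exact one_le_sqrt_one_add_sq _
  have hb1 : 1 ≤ ‖b‖ := by rw [hnb]; exact one_le_sqrt_one_add_sq _
  rw [ea, eb]
  refine (unit_diff a b ha1 hb1).trans ?_
  have hab : a - b = emb n (gradient h q' - gradient h p') (0:ℝ) := by
    rw [hadef, hbdef, emb_sub]
    exact congrArg₂ (emb n) (by abel) (by ring)
  have : ‖a - b‖ = ‖gradient h q' - gradient h p'‖ := by
    rw [hab, norm_emb_zero hn]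
  rw [this]
  have := grad_lip hC2 hsupp q' p'
  rw [norm_sub_rev q' p'] at this
  nlinarith [supHess_nonneg hC2 hsupp, norm_nonneg (gradient h q' - gradient h p'),
    norm_nonneg (p' - q')]

/-! ### Positivity facts -/

private lemma one_le_Cs {h : En' n → ℝ} (hC2 : ContDiff ℝ 2 h)
    (hsupp : HasCompactSupport h) : 1 ≤ Cs n h := by
  have habs : (fun y : En' n => |h y|) = fun y => ‖h y‖ :=
    funext fun y => (Real.norm_eq_abs _).symm
  have bdd1 : BddAbove (Set.range fun y : En' n => |h y|) := by
    rw [habs]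
    exact hC2.continuous.norm.bddAbove_range_of_hasCompactSupport hsupp.norm
  have h1 : 0 ≤ supAbs n h := le_trans (abs_nonneg (h 0)) (le_ciSup bdd1 0)
  have bdd2 : BddAbove (Set.range fun y : En' n => ‖fderiv ℝ h y‖) :=
    (hC2.continuous_fderiv (by norm_num)).norm.bddAbove_range_of_hasCompactSupport
      (hsupp.fderiv ℝ).norm
  have h2 : 0 ≤ supGrad n h := le_trans (norm_nonneg (fderiv ℝ h 0)) (le_ciSup bdd2 0)
  rw [Cs, normC1]
  linarith

private lemma supHess_pos (hn2 : 2 ≤ n) {h : En' n → ℝ} (hC2 : ContDiff ℝ 2 h)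
    (hsupp : HasCompactSupport h) (hne : h ≠ 0) : 0 < supHess n h := by
  rcases lt_or_eq_of_le (supHess_nonneg hC2 hsupp) with hlt | heq
  · exact hlt
  exfalso
  apply hne
  have hzero : ∀ y, fderiv ℝ (fderiv ℝ h) y = 0 := fun y =>
    (norm_le_zero_iff (a := fderiv ℝ (fderiv ℝ h) y)).1 (le_trans (hess_le hC2 hsupp y) heq.symm.le)
  have hc1 : Differentiable ℝ (fderiv ℝ h) :=
    (hC2.fderiv_right (m := 1) (by norm_num)).differentiable (by norm_num)
  have hconst : ∀ y z, fderiv ℝ h y = fderiv ℝ h z := fun y z =>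
    is_const_of_fderiv_eq_zero hc1 hzero y z
  obtain ⟨R, hR⟩ := hsupp.isBounded.subset_closedBall (0 : En' n)
  have hfin : (0:ℕ) < n - 1 := by omega
  set e : En' n := EuclideanSpace.single (⟨0, hfin⟩ : Fin (n-1)) (1:ℝ) with he
  have hne1 : ‖e‖ = 1 := by rw [he, EuclideanSpace.norm_single]; norm_num
  set y₀ := (|R| + 1) • e with hy₀def
  have hy₀norm : ‖y₀‖ = |R| + 1 := by
    rw [hy₀def, norm_smul, hne1, mul_one, Real.norm_eq_abs,
      abs_of_pos (by positivity : (0:ℝ) < |R| + 1)]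
  have hy₀ : y₀ ∉ tsupport h := by
    intro hmem
    have hball := hR hmem
    rw [Metric.mem_closedBall, dist_zero_right, hy₀norm] at hball
    have := le_abs_self R
    linarith
  have hy₀' : fderiv ℝ h y₀ = 0 := by
    apply image_eq_zero_of_notMem_tsupport
    intro hmem
    exact hy₀ (tsupport_fderiv_subset ℝ hmem)
  have hdz : ∀ y, fderiv ℝ h y = 0 := fun y => (hconst y y₀).trans hy₀'
  have hhconst : ∀ y z, h y = h z := fun y z =>
    is_const_of_fderiv_eq_zero (hC2.differentiable (by norm_num)) hdz y z
  funext y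
  rw [hhconst y y₀]
  exact image_eq_zero_of_notMem_tsupport hy₀

end AuxProof


/-- Proposition 8 of the paper: for a perturbed `C²` half space, for every
`x` in the `ρ₀`-neighborhood of `Γ` and every `y ∈ Γ`,
`|∇d(x) - ∇d(y)| ≤ C(n) C_s(h)² ‖∇'²h‖_∞ |x - y|`, where `d` is the signed distance to `Γ`. -/
theorem signed_distance_gradient_difference (n : ℕ) (hn : 2 ≤ n) :
    ∃ C : ℝ, 0 < C ∧
      ∀ h : En' n → ℝ, ContDiff ℝ 2 h → HasCompactSupport h → h ≠ 0 →
        ∀ ρ₀ : ℝ, 0 < ρ₀ → UniqueProj n (bdry n h) (2 * ρ₀) →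
        ∀ x : En n, |sdist n h x| < ρ₀ →
        ∀ y ∈ bdry n h,
          ‖gradient (sdist n h) x - gradient (sdist n h) y‖ ≤
            C * Cs n h ^ 2 * supHess n h * ‖x - y‖ := by
  refine ⟨32, by norm_num, ?_⟩
  intro h hC2 hsupp hne ρ₀ hρ₀ hUP x hx y hy
  have hn0 : 0 < n := by omega
  have hHpos : 0 < supHess n h := supHess_pos hn hC2 hsupp hne
  have hCs : 1 ≤ Cs n h := one_le_Cs hC2 hsupp
  have hCs2 : 1 ≤ Cs n h ^ 2 := by nlinarith
  set H := supHess n h with hHdef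
  set D := ‖x - y‖ with hDdef
  have hD0 : 0 ≤ D := norm_nonneg _
  by_cases hcase : 1 ≤ 16 * H * D
  · -- x and y are far apart: use the Lipschitz bound on the gradient
    have g1 := norm_gradient_sdist_le_one hn0 hC2.continuous (h := h) x
    have g2 := norm_gradient_sdist_le_one hn0 hC2.continuous (h := h) y
    have hle2 : ‖gradient (sdist n h) x - gradient (sdist n h) y‖ ≤ 2 :=
      le_trans (norm_sub_le _ _) (by linarith)
    refine hle2.trans ?_
    have h32 : (2:ℝ) ≤ 32 * H * D := by linarith
    calc (2:ℝ) ≤ 32 * H * D := h32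
      _ ≤ 32 * Cs n h ^ 2 * H * D := by
          nlinarith [mul_nonneg hHpos.le hD0]
  · push_neg at hcase
    have hHD : H * D < 1 / 16 := by linarith
    obtain ⟨q', hdist, hxeq⟩ := exists_foot hn0 hC2 x
    set τ := (lastC n x - h q') * Real.sqrt (1 + ‖gradient h q'‖ ^ 2) with hτdef
    have hnormν : ‖nor n h q'‖ = 1 := nor_norm hn0 q'
    have habs : ‖x - emb n q' (h q')‖ = |τ| := by
      rw [hxeq, add_sub_cancel_left, norm_smul, hnormν, Real.norm_eq_abs, mul_one]
    have hinf : Metric.infDist x (bdry n h) = |τ| := by rw [← hdist, habs]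
    have hτD : |τ| ≤ D := by
      rw [← hinf]
      have := Metric.infDist_le_dist_of_mem (x := x) hy
      rwa [dist_eq_norm] at this
    have hτH : |τ| * H < 1 / 2 := by
      have h1 : |τ| * H ≤ D * H := mul_le_mul_of_nonneg_right hτD hHpos.le
      nlinarith
    have hinf' : Metric.infDist (emb n q' (h q') + τ • nor n h q') (bdry n h) = |τ| := by
      rw [← hxeq]
      exact hinf
    have hgx : HasGradientAt (sdist n h) (nor n h q') x := by
      rw [hxeq]
      exact hasGradientAt_sdist hn0 hC2 hsupp hHpos q' hinf' hτH
    set y' := proj n y with hy'def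
    have hyeq : y = emb n y' (h y') + (0:ℝ) • nor n h y' := by
      rw [zero_smul, add_zero]
      exact bdry_eq_emb hn0 hy
    have hinfy : Metric.infDist (emb n y' (h y') + (0:ℝ) • nor n h y') (bdry n h)
        = |(0:ℝ)| := by
      rw [← hyeq, abs_zero]
      exact Metric.infDist_zero_of_mem hy
    have hgy : HasGradientAt (sdist n h) (nor n h y') y := by
      rw [hyeq]
      refine hasGradientAt_sdist hn0 hC2 hsupp hHpos y' hinfy ?_
      rw [abs_zero, zero_mul]
      norm_num
    rw [hgx.gradient, hgy.gradient]
    have hPy : ‖emb n q' (h q') - y‖ ≤ |τ| + D := by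
      have tri := dist_triangle (emb n q' (h q')) x y
      rw [dist_eq_norm, dist_eq_norm, dist_eq_norm] at tri
      have : ‖emb n q' (h q') - x‖ = |τ| := by
        rw [norm_sub_rev]
        exact habs
      linarith
    have hq'y' : ‖q' - y'‖ ≤ |τ| + D := by
      have e : q' - y' = proj n (emb n q' (h q') - y) := by
        rw [proj_sub, proj_emb, hy'def]
      rw [e]
      exact (norm_proj_le hn0 _).trans hPy
    calc ‖nor n h q' - nor n h y'‖
        ≤ 2 * H * ‖q' - y'‖ := nor_lip hn0 hC2 hsupp q' y'
      _ ≤ 2 * H * (|τ| + D) := by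
          apply mul_le_mul_of_nonneg_left hq'y' (by positivity)
      _ ≤ 2 * H * (2 * D) := by nlinarith [hτD, hHpos.le]
      _ ≤ 32 * Cs n h ^ 2 * H * D := by
          nlinarith [mul_nonneg hHpos.le hD0]


end GG
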